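/- Assume every hospital's preference is substitutable and let φ̄ be the doctor-optimal rule. Then for every doctor d, every preference P_d and every preference P'_d, the P_d-best element of d's option set under truth-telling is weakly P_d-preferred to the P_d-best element of d's option set under the report P'_d: C_d(P_d, O^{φ̄}(P_d)) R_d C_d(P_d, O^{φ̄}(P'_d)). -/
import Mathlib


set_option linter.unusedSectionVars false

namespace Matching

open Finset

/-- A many-to-one matching market with contracts: each contract `x` involves exactly one
doctor `xD x` and one hospital `xH x`; each hospital `h` has a fixed antisymmetric,
transitive and complete preference `prH h`, modelled as a linear order on sets of
contracts (only its comparisons between allocations of contracts involving `h` matter). -/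
structure Market (D H X : Type*) where
  xD : X → D
  xH : X → H
  prH : H → LinearOrder (Finset X)

/-- A doctor's preference: an antisymmetric, transitive and complete preference, modelled
as a linear order on sets of contracts (only comparisons between `∅` and singletons of
contracts involving the doctor matter). -/
abbrev Pref (X : Type*) := LinearOrder (Finset X)

/-- A profile of doctors' preferences. -/
abbrev Profile (D X : Type*) := D → Pref X

variable {D H X : Type*}
variable [DecidableEq D] [DecidableEq H] [DecidableEq X] [Fintype D] [Fintype H] [Fintype X]

/-- `Y_d` : the contracts in `Y` involving doctor `d`. -/
def docPart (M : Market D H X) (Y : Finset X) (d : D) : Finset X :=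
  Y.filter fun x => M.xD x = d

/-- `Y_h` : the contracts in `Y` involving hospital `h`. -/
def hospPart (M : Market D H X) (Y : Finset X) (h : H) : Finset X :=
  Y.filter fun x => M.xH x = h

/-- An allocation: distinct contracts involve distinct doctors. -/
def IsAllocation (M : Market D H X) (Z : Finset X) : Prop :=
  ∀ x ∈ Z, ∀ y ∈ Z, M.xD x = M.xD y → x = y

/-- `A(Y)` : the allocations contained in `Y`. -/
def allocs (M : Market D H X) (Y : Finset X) : Finset (Finset X) :=
  Y.powerset.filter fun Z => ∀ x ∈ Z, ∀ y ∈ Z, M.xD x = M.xD y → x = y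

lemma empty_mem_allocs (M : Market D H X) (Y : Finset X) : ∅ ∈ allocs M Y := by
  simp [allocs]

/-- The best allocation contained in `Y` according to the linear order `pr`. -/
def bestAlloc (M : Market D H X) (pr : Pref X) (Y : Finset X) : Finset X :=
  @Finset.max' _ pr (allocs M Y) ⟨∅, empty_mem_allocs M Y⟩

/-- `C_h(Y)` : hospital `h`'s choice set from `Y` (the `≻_h`-maximum of `A(Y_h)`). -/
def Ch (M : Market D H X) (h : H) (Y : Finset X) : Finset X :=
  bestAlloc M (M.prH h) (hospPart M Y h)

/-- `C_d(P_d, Y)` : doctor `d`'s choice set from `Y` (the `P_d`-maximum of `A(Y_d)`). -/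
def Cd (M : Market D H X) (Pd : Pref X) (d : D) (Y : Finset X) : Finset X :=
  bestAlloc M Pd (docPart M Y d)

/-- `C_H(Y) = ∪_{h ∈ H} C_h(Y)`. -/
def CH (M : Market D H X) (Y : Finset X) : Finset X :=
  univ.biUnion fun h => Ch M h Y

/-- `C_D(Y) = ∪_{d ∈ D} C_d(Y)`. -/
def CD (M : Market D H X) (P : Profile D X) (Y : Finset X) : Finset X :=
  univ.biUnion fun d => Cd M (P d) d Y

/-- Substitutability of hospital `h`'s preference: `x ∈ C_h(W)` and `x ∈ Y_h ⊆ W_h`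
imply `x ∈ C_h(Y)`. -/
def Substitutable (M : Market D H X) (h : H) : Prop :=
  ∀ W Y : Finset X, hospPart M Y h ⊆ hospPart M W h →
    ∀ x ∈ hospPart M Y h, x ∈ Ch M h W → x ∈ Ch M h Y

/-- The sets `X^t` of still-available contracts in the doctor-proposing deferred
acceptance algorithm (0-based: index `t` corresponds to iteration `t+1`). -/
def DDAsets (M : Market D H X) (P : Profile D X) : ℕ → Finset X
  | 0 => univ
  | t + 1 =>
      DDAsets M P t \ (CD M P (DDAsets M P t) \ CH M (CD M P (DDAsets M P t)))

/-- `O^t` : the offers made by the doctors at iteration `t` of D-DA (0-based). -/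
def offers (M : Market D H X) (P : Profile D X) (t : ℕ) : Finset X :=
  CD M P (DDAsets M P t)

/-- `O_A^t = ∪_{k ≤ t} O^k` : the accumulated offers up to iteration `t` (0-based). -/
def accOffers (M : Market D H X) (P : Profile D X) (t : ℕ) : Finset X :=
  (Finset.range (t + 1)).biUnion fun k => offers M P k

/-- D-DA has stopped at iteration `t`: all offers are accepted. -/
def DDAstopped (M : Market D H X) (P : Profile D X) (t : ℕ) : Prop :=
  CH M (offers M P t) = offers M P t

/-- The (0-based) last iteration of D-DA, i.e. `T - 1` where `T` is the number of
iterations of D-DA. -/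
noncomputable def DDAlast (M : Market D H X) (P : Profile D X) : ℕ :=
  sInf {t | DDAstopped M P t}

/-- The output of D-DA (the algorithm provably stops by iteration `Fintype.card X`,
and once stopped the offer sets stay constant). -/
def DDAoutput (M : Market D H X) (P : Profile D X) : Finset X :=
  CH M (offers M P (Fintype.card X))

/-- The doctor-optimal rule `φ̄`, giving doctor `d`'s outcome `φ̄_d(P)` (an element of
`A(𝐗_d)`, i.e. `∅` or a singleton). -/
def docOpt (M : Market D H X) (P : Profile D X) (d : D) : Finset X :=
  docPart M (DDAoutput M P) d

/-- The sets `X^t` of still-available contracts in the hospital-proposing deferred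
acceptance algorithm (0-based). -/
def HDAsets (M : Market D H X) (P : Profile D X) : ℕ → Finset X
  | 0 => univ
  | t + 1 =>
      HDAsets M P t \ (CH M (HDAsets M P t) \ CD M P (CH M (HDAsets M P t)))

/-- The offers made by the hospitals at iteration `t` of H-DA (0-based). -/
def hOffers (M : Market D H X) (P : Profile D X) (t : ℕ) : Finset X :=
  CH M (HDAsets M P t)

/-- The output of H-DA. -/
def HDAoutput (M : Market D H X) (P : Profile D X) : Finset X :=
  CD M P (hOffers M P (Fintype.card X))

/-- The hospital-optimal rule `φ̲`, giving doctor `d`'s outcome `φ̲_d(P)`. -/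
def hospOpt (M : Market D H X) (P : Profile D X) (d : D) : Finset X :=
  docPart M (HDAoutput M P) d

/-- The option set `O^φ(P_d)` left open by `P_d` at the rule `φ`. -/
def optionSet (rule : Profile D X → D → Finset X) (d : D) (Pd : Pref X) :
    Set (Finset X) :=
  {S | ∃ P : Profile D X, P d = Pd ∧ S = rule P d}

open scoped Classical in
/-- `W_d(pr, S)` : the `pr`-worst element of the (finite) set `S` of outcomes. -/
noncomputable def worstIn (pr : Pref X) (S : Set (Finset X)) : Finset X :=
  if h : S.Nonempty then
    @Finset.min' _ pr (Set.toFinite S).toFinset ((Set.Finite.toFinset_nonempty _).mpr h)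
  else ∅

open scoped Classical in
/-- The `pr`-best element of the (finite) set `S` of outcomes. -/
noncomputable def bestIn (pr : Pref X) (S : Set (Finset X)) : Finset X :=
  if h : S.Nonempty then
    @Finset.max' _ pr (Set.toFinite S).toFinset ((Set.Finite.toFinset_nonempty _).mpr h)
  else ∅

/-- `P'_d` is a manipulation of the rule at `P_d` : for some subprofile of the other
doctors, reporting `P'_d` gives a strictly `P_d`-better outcome than truth-telling. -/
def IsManip (rule : Profile D X → D → Finset X) (d : D) (Pd P'd : Pref X) : Prop :=
  ∃ P : Profile D X, P d = Pd ∧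
    Pd.lt (rule P d) (rule (Function.update P d P'd) d)

/-- `P'_d` is an obvious manipulation of the rule at `P_d`. -/
def IsObviousManip (rule : Profile D X → D → Finset X) (d : D) (Pd P'd : Pref X) :
    Prop :=
  IsManip rule d Pd P'd ∧
    (Pd.lt (worstIn Pd (optionSet rule d Pd)) (worstIn Pd (optionSet rule d P'd)) ∨
     Pd.lt (bestIn Pd (optionSet rule d Pd)) (bestIn Pd (optionSet rule d P'd)))

/-- A rule is not obviously manipulable (NOM). -/
def NOM (rule : Profile D X → D → Finset X) : Prop :=
  ∀ (d : D) (Pd P'd : Pref X), ¬ IsObviousManip rule d Pd P'd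

/-- A rule is obviously manipulable (OM). -/
def OM (rule : Profile D X → D → Finset X) : Prop :=
  ∃ (d : D) (Pd P'd : Pref X), IsObviousManip rule d Pd P'd

/-- `Y` is a stable allocation at the profile `P` : it is an individually rational
allocation and admits no blocking contract. -/
def IsStable (M : Market D H X) (P : Profile D X) (Y : Finset X) : Prop :=
  IsAllocation M Y ∧ CD M P Y = Y ∧ CH M Y = Y ∧
    ∀ x : X, x ∉ Y →
      ¬ (x ∈ Cd M (P (M.xD x)) (M.xD x) (insert x Y) ∧
         x ∈ Ch M (M.xH x) (insert x Y))

/-- `⌈kq⌉` where `k` is the number of stable allocations at `P`. -/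
noncomputable def quantileIndex (M : Market D H X) (P : Profile D X) (q : ℝ) : ℕ :=
  ⌈(Set.ncard {Y : Finset X | IsStable M P Y} : ℝ) * q⌉₊

/-- `Z` is doctor `d`'s `⌈kq⌉`-th best outcome (according to `P d`) among the `k` stable
allocations at `P` : it is the outcome of some stable allocation, strictly fewer than
`⌈kq⌉` stable allocations give `d` a strictly better outcome, and at least `⌈kq⌉` stable
allocations give `d` a weakly better outcome. -/
def IsQuantileOutcome (M : Market D H X) (P : Profile D X) (q : ℝ) (d : D)
    (Z : Finset X) : Prop :=
  (∃ Y : Finset X, IsStable M P Y ∧ docPart M Y d = Z) ∧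
    Set.ncard {Y : Finset X | IsStable M P Y ∧ (P d).lt Z (docPart M Y d)} <
      quantileIndex M P q ∧
    quantileIndex M P q ≤
      Set.ncard {Y : Finset X | IsStable M P Y ∧ (P d).le Z (docPart M Y d)}

/-! ### Auxiliary lemmas -/

section Auxiliary

variable (M : Market D H X)

lemma mem_allocs_iff {Y Z : Finset X} :
    Z ∈ allocs M Y ↔ Z ⊆ Y ∧ IsAllocation M Z := by
  simp [allocs, IsAllocation, Finset.mem_filter, Finset.mem_powerset]

lemma bestAlloc_mem (pr : Pref X) (Y : Finset X) :
    bestAlloc M pr Y ∈ allocs M Y :=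
  @Finset.max'_mem _ pr _ _

lemma le_bestAlloc (pr : Pref X) {Y Z : Finset X} (h : Z ∈ allocs M Y) :
    pr.le Z (bestAlloc M pr Y) :=
  @Finset.le_max' _ pr _ _ h

lemma bestAlloc_subset (pr : Pref X) (Y : Finset X) :
    bestAlloc M pr Y ⊆ Y :=
  ((mem_allocs_iff M).mp (bestAlloc_mem M pr Y)).1

lemma bestAlloc_isAllocation (pr : Pref X) (Y : Finset X) :
    IsAllocation M (bestAlloc M pr Y) :=
  ((mem_allocs_iff M).mp (bestAlloc_mem M pr Y)).2

lemma bestAlloc_empty (pr : Pref X) : bestAlloc M pr ∅ = ∅ :=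
  Finset.subset_empty.mp (bestAlloc_subset M pr ∅)

lemma mem_docPart {Y : Finset X} {d : D} {x : X} :
    x ∈ docPart M Y d ↔ x ∈ Y ∧ M.xD x = d := by
  simp [docPart]

lemma mem_hospPart {Y : Finset X} {h : H} {x : X} :
    x ∈ hospPart M Y h ↔ x ∈ Y ∧ M.xH x = h := by
  simp [hospPart]

lemma Cd_subset (pr : Pref X) (d : D) (Y : Finset X) :
    Cd M pr d Y ⊆ docPart M Y d :=
  bestAlloc_subset M pr _

lemma Ch_subset (h : H) (Y : Finset X) :
    Ch M h Y ⊆ hospPart M Y h :=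
  bestAlloc_subset M _ _

lemma CH_subset (Y : Finset X) : CH M Y ⊆ Y := by
  intro x hx
  rcases Finset.mem_biUnion.mp hx with ⟨h, -, hx⟩
  exact ((mem_hospPart M).mp (Ch_subset M h Y hx)).1

lemma CD_subset (P : Profile D X) (Y : Finset X) : CD M P Y ⊆ Y := by
  intro x hx
  rcases Finset.mem_biUnion.mp hx with ⟨d, -, hx⟩
  exact ((mem_docPart M).mp (Cd_subset M (P d) d Y hx)).1

lemma Cd_empty (pr : Pref X) (d : D) : Cd M pr d ∅ = ∅ := by
  have := Cd_subset M pr d ∅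
  simp only [docPart, Finset.filter_empty, Finset.subset_empty] at this
  exact this

lemma Ch_empty (h : H) : Ch M h ∅ = ∅ := by
  have := Ch_subset M h ∅
  simp only [hospPart, Finset.filter_empty, Finset.subset_empty] at this
  exact this

lemma CD_empty (P : Profile D X) : CD M P ∅ = ∅ := by
  apply Finset.subset_empty.mp
  exact CD_subset M P ∅

lemma CH_empty : CH M ∅ = ∅ :=
  Finset.subset_empty.mp (CH_subset M ∅)

/-- Membership in `C_d` determines the doctor, and `C_d` is an allocation. -/
lemma xD_of_mem_Cd {pr : Pref X} {d : D} {Y : Finset X} {x : X}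
    (hx : x ∈ Cd M pr d Y) : M.xD x = d :=
  ((mem_docPart M).mp (Cd_subset M pr d Y hx)).2

lemma Cd_isAllocation (pr : Pref X) (d : D) (Y : Finset X) :
    IsAllocation M (Cd M pr d Y) :=
  bestAlloc_isAllocation M pr _

lemma xH_of_mem_Ch {h : H} {Y : Finset X} {x : X}
    (hx : x ∈ Ch M h Y) : M.xH x = h :=
  ((mem_hospPart M).mp (Ch_subset M h Y hx)).2

/-- Contracts accepted by a hospital from a set are individually acceptable
(by substitutability). -/
lemma mem_Ch_singleton {h : H} {W : Finset X} {x : X}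
    (hsub : Substitutable M h) (hx : x ∈ Ch M h W) :
    x ∈ Ch M h {x} := by
  have hxh : M.xH x = h := xH_of_mem_Ch M hx
  have hxW : x ∈ W := ((mem_hospPart M).mp (Ch_subset M h W hx)).1
  apply hsub W {x}
  · intro y hy
    rcases (mem_hospPart M).mp hy with ⟨hy1, hy2⟩
    rw [Finset.mem_singleton] at hy1
    subst hy1
    exact (mem_hospPart M).mpr ⟨hxW, hy2⟩
  · exact (mem_hospPart M).mpr ⟨Finset.mem_singleton_self x, hxh⟩
  · exact hx

/-- If a contract of doctor `d` is in `C_D`, it is in `C_d`. -/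
lemma mem_Cd_of_mem_CD {P : Profile D X} {Y : Finset X} {x : X} {d : D}
    (hx : x ∈ CD M P Y) (hxd : M.xD x = d) : x ∈ Cd M (P d) d Y := by
  rcases Finset.mem_biUnion.mp hx with ⟨e, -, hx⟩
  have : e = d := by rw [← xD_of_mem_Cd M hx, hxd]
  rwa [this] at hx

/-! ### Termination of D-DA -/

lemma DDAsets_succ (P : Profile D X) (t : ℕ) :
    DDAsets M P (t + 1) =
      DDAsets M P t \ (offers M P t \ CH M (offers M P t)) := rfl

lemma DDAstopped_succ_of (P : Profile D X) {t : ℕ} (h : DDAstopped M P t) :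
    DDAstopped M P (t + 1) := by
  have hsets : DDAsets M P (t + 1) = DDAsets M P t := by
    rw [DDAsets_succ, h, Finset.sdiff_self, Finset.sdiff_empty]
  unfold DDAstopped offers
  rw [hsets]
  exact h

lemma DDAstopped_mono (P : Profile D X) {s t : ℕ} (hst : s ≤ t)
    (h : DDAstopped M P s) : DDAstopped M P t := by
  induction t with
  | zero => rwa [Nat.le_zero.mp hst] at h
  | succ n ih =>
      rcases Nat.lt_or_ge s (n + 1) with hlt | hge
      · exact DDAstopped_succ_of M P (ih (Nat.lt_succ_iff.mp hlt))
      · have : s = n + 1 := le_antisymm hst hge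
        rwa [← this]

lemma card_DDAsets_lt (P : Profile D X) {t : ℕ} (h : ¬ DDAstopped M P t) :
    (DDAsets M P (t + 1)).card < (DDAsets M P t).card := by
  apply Finset.card_lt_card
  constructor
  · rw [DDAsets_succ]; exact Finset.sdiff_subset
  · intro hsub
    apply h
    -- if no contract was removed, then offers ⊆ CH offers, hence equality
    apply Finset.Subset.antisymm (CH_subset M _)
    intro x hx
    by_contra hxC
    have hxX : x ∈ DDAsets M P t := CD_subset M P _ hx
    have hx1 : x ∈ DDAsets M P (t + 1) := hsub hxX
    rw [DDAsets_succ, Finset.mem_sdiff] at hx1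
    exact hx1.2 (Finset.mem_sdiff.mpr ⟨hx, hxC⟩)

lemma DDAstopped_card (P : Profile D X) :
    DDAstopped M P (Fintype.card X) := by
  have key : ∀ t : ℕ, (∃ s ≤ t, DDAstopped M P s) ∨
      (DDAsets M P t).card + t ≤ Fintype.card X := by
    intro t
    induction t with
    | zero =>
        right
        simpa [DDAsets] using Finset.card_le_univ (DDAsets M P 0)
    | succ n ih =>
        rcases ih with ⟨s, hs, hstop⟩ | hcard
        · exact Or.inl ⟨s, Nat.le_succ_of_le hs, hstop⟩
        · by_cases h : DDAstopped M P n
          · exact Or.inl ⟨n, Nat.le_succ n, h⟩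
          · right
            have := card_DDAsets_lt M P h
            omega
  rcases key (Fintype.card X) with ⟨s, hs, hstop⟩ | hcard
  · exact DDAstopped_mono M P hs hstop
  · have hempty : DDAsets M P (Fintype.card X) = ∅ := by
      rw [← Finset.card_eq_zero]; omega
    unfold DDAstopped offers
    rw [hempty, CD_empty, CH_empty]

lemma DDAoutput_eq (P : Profile D X) :
    DDAoutput M P = offers M P (Fintype.card X) :=
  DDAstopped_card M P

/-! ### The reject-all preference -/

/-- A preference with `∅` on top: the doctor chooses nothing from any set. -/
noncomputable def rejectAll (Pd : Pref X) : Pref X :=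
  letI := Pd
  LinearOrder.lift' (fun s : Finset X => toLex (((s = ∅ : Bool), s) : Bool × Finset X))
    (fun a b h => congrArg (fun p : Bool ×ₗ Finset X => (ofLex p).2) h)

lemma le_rejectAll_empty (Pd : Pref X) (a : Finset X) :
    (rejectAll Pd).le a ∅ := by
  show Prod.Lex (· < ·) Pd.le ((a = ∅ : Bool), a) ((((∅ : Finset X) = ∅ : Bool), (∅ : Finset X)))
  by_cases h : a = ∅
  · subst h
    exact Prod.Lex.right _ (Pd.le_refl ∅)
  · rw [decide_eq_false h, decide_eq_true (by rfl : (∅ : Finset X) = ∅)]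
    exact Prod.Lex.left _ _ (by exact Bool.false_lt_true)

lemma Cd_rejectAll (Pd : Pref X) (d : D) (Y : Finset X) :
    Cd M (rejectAll Pd) d Y = ∅ := by
  have h1 : (rejectAll Pd).le (Cd M (rejectAll Pd) d Y) ∅ := le_rejectAll_empty Pd _
  have h2 : (rejectAll Pd).le ∅ (Cd M (rejectAll Pd) d Y) :=
    le_bestAlloc M (rejectAll Pd) (empty_mem_allocs M _)
  exact (rejectAll Pd).le_antisymm _ _ h1 h2

/-! ### The single-doctor profile -/

/-- The profile where `d` reports `Pd` and all other doctors reject everything. -/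
noncomputable def soloProfile (d : D) (Pd : Pref X) : Profile D X :=
  fun e => if e = d then Pd else rejectAll Pd

lemma soloProfile_d (d : D) (Pd : Pref X) : soloProfile (X := X) d Pd d = Pd := by
  simp [soloProfile]

lemma CD_soloProfile (d : D) (Pd : Pref X) (Y : Finset X) :
    CD M (soloProfile d Pd) Y = Cd M Pd d Y := by
  ext x
  simp only [CD, Finset.mem_biUnion, Finset.mem_univ, true_and]
  constructor
  · rintro ⟨e, he⟩
    by_cases h : e = d
    · subst h
      simpa [soloProfile] using he
    · rw [show soloProfile d Pd e = rejectAll Pd by simp [soloProfile, h],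
        Cd_rejectAll] at he
      exact absurd he (Finset.notMem_empty x)
  · intro hx
    exact ⟨d, by simpa [soloProfile] using hx⟩

/-- In the solo profile, an individually acceptable contract of `d` is never removed. -/
lemma mem_DDAsets_solo (d : D) (Pd : Pref X) {x : X}
    (hx : x ∈ Ch M (M.xH x) {x}) (hxd : M.xD x = d) (t : ℕ) :
    x ∈ DDAsets M (soloProfile d Pd) t := by
  induction t with
  | zero => simp [DDAsets]
  | succ n ih =>
      rw [DDAsets_succ, Finset.mem_sdiff]
      refine ⟨ih, fun hmem => ?_⟩
      rw [Finset.mem_sdiff] at hmem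
      apply hmem.2
      set O := offers M (soloProfile d Pd) n with hO
      have hxO : x ∈ O := hmem.1
      have hOC : O = Cd M Pd d (DDAsets M (soloProfile d Pd) n) :=
        CD_soloProfile M d Pd _
      -- O is the singleton {x}
      have hsingle : O = {x} := by
        apply Finset.Subset.antisymm
        · intro y hy
          rw [Finset.mem_singleton]
          have hyd : M.xD y = d := xD_of_mem_Cd M (hOC ▸ hy)
          exact Cd_isAllocation M Pd d _ y (hOC ▸ hy) x (hOC ▸ hxO) (by rw [hyd, hxd])
        · intro y hy
          rw [Finset.mem_singleton] at hy
          subst hy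
          exact hxO
      rw [hsingle]
      exact Finset.mem_biUnion.mpr ⟨M.xH x, Finset.mem_univ _, hx⟩

/-- In the solo profile, `d`'s outcome is the offer set at the final iteration. -/
lemma docOpt_solo (d : D) (Pd : Pref X) :
    docOpt M (soloProfile d Pd) d =
      Cd M Pd d (DDAsets M (soloProfile d Pd) (Fintype.card X)) := by
  unfold docOpt
  rw [DDAoutput_eq, offers, CD_soloProfile]
  apply Finset.Subset.antisymm
  · intro y hy
    exact ((mem_docPart M).mp hy).1
  · intro y hy
    exact (mem_docPart M).mpr ⟨hy, xD_of_mem_Cd M hy⟩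

/-- Any outcome in any option set of `d` is `Pd`-dominated by `d`'s outcome in the
solo profile. -/
lemma le_docOpt_solo (hsub : ∀ h : H, Substitutable M h) (d : D) (Pd : Pref X)
    {S : Finset X} {Q : Pref X} (hS : S ∈ optionSet (docOpt M) d Q) :
    Pd.le S (docOpt M (soloProfile d Pd) d) := by
  rcases hS with ⟨P, -, rfl⟩
  rw [docOpt_solo]
  rcases Finset.eq_empty_or_nonempty (docOpt M P d) with hemp | ⟨x, hx⟩
  · rw [hemp]
    exact le_bestAlloc M Pd (empty_mem_allocs M _)
  · -- `docOpt M P d` is a singleton `{x}` with `x` individually acceptable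
    have hxd : M.xD x = d := ((mem_docPart M).mp hx).2
    have hxout : x ∈ DDAoutput M P := ((mem_docPart M).mp hx).1
    have hxoffers : x ∈ offers M P (Fintype.card X) :=
      CH_subset M _ hxout
    -- individual acceptability
    have hxacc : x ∈ Ch M (M.xH x) {x} := by
      have hxCH : x ∈ CH M (offers M P (Fintype.card X)) := hxout
      rcases Finset.mem_biUnion.mp hxCH with ⟨h, -, hxh⟩
      have : M.xH x = h := xH_of_mem_Ch M hxh
      subst this
      exact mem_Ch_singleton M (hsub _) hxh
    -- `docOpt M P d = {x}`
    have hsingle : docOpt M P d = {x} := by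
      apply Finset.Subset.antisymm
      · intro y hy
        rw [Finset.mem_singleton]
        have hyd : M.xD y = d := ((mem_docPart M).mp hy).2
        have hyoffers : y ∈ offers M P (Fintype.card X) :=
          CH_subset M _ ((mem_docPart M).mp hy).1
        have hyCd : y ∈ Cd M (P d) d (DDAsets M P (Fintype.card X)) :=
          mem_Cd_of_mem_CD M hyoffers hyd
        have hxCd : x ∈ Cd M (P d) d (DDAsets M P (Fintype.card X)) :=
          mem_Cd_of_mem_CD M hxoffers hxd
        exact Cd_isAllocation M (P d) d _ y hyCd x hxCd (by rw [hyd, hxd])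
      · intro y hy
        rw [Finset.mem_singleton] at hy
        subst hy
        exact hx
    rw [hsingle]
    apply le_bestAlloc M Pd
    rw [mem_allocs_iff]
    constructor
    · intro y hy
      rw [Finset.mem_singleton] at hy
      subst hy
      exact (mem_docPart M).mpr ⟨mem_DDAsets_solo M d Pd hxacc hxd _, hxd⟩
    · intro y hy z hz _
      rw [Finset.mem_singleton] at hy hz
      rw [hy, hz]

lemma optionSet_nonempty (d : D) (Q : Pref X) :
    (optionSet (docOpt M) d Q).Nonempty :=
  ⟨docOpt M (fun _ => Q) d, fun _ => Q, rfl, rfl⟩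

lemma bestIn_mem (pr : Pref X) {S : Set (Finset X)} (h : S.Nonempty) :
    bestIn pr S ∈ S := by
  classical
  rw [bestIn, dif_pos h]
  have := @Finset.max'_mem _ pr (Set.toFinite S).toFinset
    ((Set.Finite.toFinset_nonempty _).mpr h)
  rwa [Set.Finite.mem_toFinset] at this

lemma le_bestIn (pr : Pref X) {S : Set (Finset X)} {a : Finset X} (ha : a ∈ S) :
    pr.le a (bestIn pr S) := by
  classical
  rw [bestIn, dif_pos ⟨a, ha⟩]
  exact @Finset.le_max' _ pr _ _ ((Set.Finite.mem_toFinset _).mpr ha)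

end Auxiliary

/-- Under substitutability, for the doctor-optimal rule, truth-telling maximizes the
best-case outcome: `C_d(P_d, O^{φ̄}(P_d)) R_d C_d(P_d, O^{φ̄}(P'_d))` for all `P'_d`. -/
theorem docOpt_best_truth_best (M : Market D H X) (hsub : ∀ h : H, Substitutable M h) :
    ∀ (d : D) (Pd P'd : Pref X),
      Pd.le (bestIn Pd (optionSet (docOpt M) d P'd))
        (bestIn Pd (optionSet (docOpt M) d Pd)) := by
  intro d Pd P'd
  have h1 : bestIn Pd (optionSet (docOpt M) d P'd) ∈ optionSet (docOpt M) d P'd :=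
    bestIn_mem Pd (optionSet_nonempty M d P'd)
  have h2 : Pd.le (bestIn Pd (optionSet (docOpt M) d P'd))
      (docOpt M (soloProfile d Pd) d) :=
    le_docOpt_solo M hsub d Pd h1
  have h3 : docOpt M (soloProfile d Pd) d ∈ optionSet (docOpt M) d Pd :=
    ⟨soloProfile d Pd, soloProfile_d d Pd, rfl⟩
  exact Pd.le_trans _ _ _ h2 (le_bestIn Pd h3)

end Matching
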